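/- arXiv:1609.01218 — 2 statements merged into one kernel-verified Lean document; each statement's English description precedes it below -/
import Mathlib

section
/- If f : ℝ → ℂ is a positive definite function, then for all x, y ∈ ℝ, |f(x) − f(y)|² ≤ 2·f(0)·Re(f(0) − f(x−y)) (Krein's inequality). -/
open Complex ComplexOrder Finset

/-- `f : ℝ → ℂ` is positive definite: for every `N`, points `x : Fin N → ℝ` and
complex numbers `z : Fin N → ℂ`, the double sum `∑ f(x k - x j) z k conj (z j)`
is a nonnegative (real) complex number. -/
def IsPosDefFn (f : ℝ → ℂ) : Prop :=
  ∀ (N : ℕ) (x : Fin N → ℝ) (z : Fin N → ℂ),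
    0 ≤ ∑ k : Fin N, ∑ j : Fin N, f (x k - x j) * z k * (starRingEnd ℂ) (z j)

lemma f0_nn (f : ℝ → ℂ) (hf : IsPosDefFn f) : 0 ≤ f 0 := by
  have := hf 1 ![0] ![1]
  simpa using this

lemma f0_im (f : ℝ → ℂ) (hf : IsPosDefFn f) : (f 0).im = 0 := by
  have h0 := f0_nn f hf
  rw [Complex.le_def] at h0
  simpa using h0.2.symm

lemma herm (f : ℝ → ℂ) (hf : IsPosDefFn f) (a : ℝ) : f (-a) = (starRingEnd ℂ) (f a) := by
  have him0 := f0_im f hf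
  have h1 := hf 2 ![a, 0] ![1, 1]
  have h2 := hf 2 ![a, 0] ![1, Complex.I]
  simp [Fin.sum_univ_two] at h1 h2
  rw [Complex.le_def] at h1 h2
  obtain ⟨_, i1⟩ := h1
  obtain ⟨_, i2⟩ := h2
  simp [Complex.add_im, Complex.mul_im, Complex.I_re, Complex.I_im] at i1 i2
  apply Complex.ext
  · simp only [Complex.conj_re]; linarith
  · simp only [Complex.conj_im]; linarith

lemma re_le (f : ℝ → ℂ) (hf : IsPosDefFn f) (a : ℝ) : (f a).re ≤ (f 0).re := by
  have h := hf 2 ![a, 0] ![1, -1]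
  simp [Fin.sum_univ_two, herm f hf a] at h
  rw [Complex.le_def] at h
  have := h.1
  simp [Complex.add_re, Complex.sub_re, Complex.conj_re] at this
  linarith

lemma key (f : ℝ → ℂ) (hf : IsPosDefFn f) (x y t : ℝ) (c : ℂ)
    (hc : Complex.normSq c = 1) :
    0 ≤ (f 0).re * t ^ 2 + 2 * t * ((f x - f y) * c).re
      + 2 * ((f 0).re - (f (x - y)).re) := by
  have him0 := f0_im f hf
  have h := hf 3 ![0, x, y] ![(t : ℂ), c, -c]
  simp [Fin.sum_univ_three] at h
  rw [Complex.le_def] at h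
  have hre := h.1
  have hx := herm f hf x
  have hy := herm f hf y
  have hxy := herm f hf (x - y)
  have e3 : y - x = -(x - y) := by ring
  rw [e3, hx, hy, hxy] at hre
  simp [Complex.add_re, Complex.mul_re, Complex.sub_re, Complex.sub_im,
    Complex.mul_im, Complex.conj_re, Complex.conj_im, Complex.ofReal_re,
    Complex.ofReal_im, Complex.neg_re, Complex.neg_im] at hre ⊢
  have hn : c.re ^ 2 + c.im ^ 2 = 1 := by
    rw [← hc]; simp [Complex.normSq_apply]; ring
  have k1 : (f 0).re * c.re ^ 2 + (f 0).re * c.im ^ 2 = (f 0).re := by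
    linear_combination (f 0).re * hn
  have k2 : (f (x - y)).re * c.re ^ 2 + (f (x - y)).re * c.im ^ 2 = (f (x - y)).re := by
    linear_combination (f (x - y)).re * hn
  ring_nf at hre k1 k2 ⊢
  linarith [hre, k1, k2]

theorem krein_inequality (f : ℝ → ℂ) (hf : IsPosDefFn f) (x y : ℝ) :
    ‖f x - f y‖ ^ 2 ≤ 2 * (f 0).re * (f 0 - f (x - y)).re := by
  have hA0 : 0 ≤ (f 0).re := by
    have h := f0_nn f hf
    rw [Complex.le_def] at h
    simpa using h.1
  have hB : 0 ≤ (f 0).re - (f (x - y)).re := by linarith [re_le f hf (x - y)]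
  rw [Complex.sub_re]
  by_cases hu : f x - f y = 0
  · rw [hu]
    simp
    positivity
  · set u := f x - f y with hudef
    set A := ‖u‖ with hAdef
    have hApos : 0 < A := norm_pos_iff.mpr hu
    have hAne : (A : ℂ) ≠ 0 := by
      simp only [ne_eq, Complex.ofReal_eq_zero]
      exact ne_of_gt hApos
    set c : ℂ := (starRingEnd ℂ) u / (A : ℂ) with hcdef
    have hc : Complex.normSq c = 1 := by
      rw [hcdef, Complex.normSq_div, Complex.normSq_conj]
      rw [Complex.normSq_eq_norm_sq, Complex.normSq_eq_norm_sq]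
      simp only [Complex.norm_real, Real.norm_eq_abs, abs_of_pos hApos]
      field_simp
      rw [hAdef]
    have huc : (u * c).re = A := by
      have h1 : u * c = (A : ℂ) := by
        rw [hcdef, mul_div_assoc']
        rw [Complex.mul_conj, Complex.normSq_eq_norm_sq]
        rw [← hAdef]
        rw [div_eq_iff hAne]
        push_cast
        ring
      rw [h1, Complex.ofReal_re]
    have key' : ∀ t : ℝ, 0 ≤ (f 0).re * t ^ 2 + 2 * t * A
        + 2 * ((f 0).re - (f (x - y)).re) := by
      intro t
      have := key f hf x y t c hc
      rwa [huc] at this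
    rcases eq_or_lt_of_le hA0 with h0 | h0
    · exfalso
      have := key' (-(((f 0).re - (f (x - y)).re) + 1) / A)
      rw [← h0] at this
      field_simp at this
      nlinarith [this, hApos]
    · have h2 := key' (-(A / (f 0).re))
      have hne : (f 0).re ≠ 0 := ne_of_gt h0
      have e : (f 0).re * (-(A / (f 0).re)) ^ 2 + 2 * (-(A / (f 0).re)) * A
          = -(A ^ 2 / (f 0).re) := by
        field_simp
        ring
      have h3 : A ^ 2 / (f 0).re ≤ 2 * ((f 0).re - (f (x - y)).re) := by linarith
      have h4 := (div_le_iff₀ h0).mp h3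
      linarith
end

section
/- If u : ℝ → ℝ is a real-valued positive definite function with u(0) = 1, then for every m ≥ 1 and all x ∈ ℝ, 1 − u(2^m·x) ≤ 2^m·(1 − u(x))·∏_{k=1}^{m} (7 + u(2^k·x))/4 (refined Linnik inequality). -/
open Complex ComplexOrder Finset

/-- `u : ℝ → ℝ` is positive definite: for every `N`, points `x : Fin N → ℝ` and
complex numbers `z : Fin N → ℂ`, the double sum `∑ u(x k - x j) z k conj (z j)`
is a nonnegative (real) complex number. -/
def IsPosDefFnR (u : ℝ → ℝ) : Prop :=
  ∀ (N : ℕ) (x : Fin N → ℝ) (z : Fin N → ℂ),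
    0 ≤ ∑ k : Fin N, ∑ j : Fin N, (u (x k - x j) : ℂ) * z k * (starRingEnd ℂ) (z j)

lemma even_u (u : ℝ → ℝ) (hu : IsPosDefFnR u) (t : ℝ) : u (-t) = u t := by
  have h := hu 2 ![t, 0] ![1, Complex.I]
  rw [Complex.le_def] at h
  have h2 := h.2
  simp [Fin.sum_univ_two, Complex.ext_iff] at h2
  linarith

lemma bound_u (u : ℝ → ℝ) (hu : IsPosDefFnR u) (h0 : u 0 = 1) (t : ℝ) :
    -1 ≤ u t ∧ u t ≤ 1 := by
  have he := even_u u hu t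
  have h1 := hu 2 ![0, t] ![1, 1]
  have h2 := hu 2 ![0, t] ![1, -1]
  rw [Complex.le_def] at h1 h2
  have r1 := h1.1
  have r2 := h2.1
  simp [Fin.sum_univ_two, h0, he] at r1 r2
  constructor <;> linarith

lemma doubling_u (u : ℝ → ℝ) (hu : IsPosDefFnR u) (h0 : u 0 = 1) (t : ℝ) :
    2 * (u t)^2 ≤ 1 + u (2*t) := by
  have he := even_u u hu t
  have he2 : u (-(2*t)) = u (2*t) := even_u u hu (2*t)
  have h := hu 3 ![0, t, 2*t] ![1, ((-2*u t : ℝ) : ℂ), 1]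
  rw [Complex.le_def] at h
  have r := h.1
  simp [Fin.sum_univ_three, Complex.ext_iff, h0] at r
  rw [show (2:ℝ)*t - t = t by ring, he, he2] at r
  rw [show t - (2:ℝ)*t = -t by ring, he] at r
  nlinarith [r]

lemma key_u (u : ℝ → ℝ) (hu : IsPosDefFnR u) (h0 : u 0 = 1) (t : ℝ) :
    1 - u (2*t) ≤ 2 * (1 - u t) * ((7 + u (2*t)) / 4) := by
  have hd := doubling_u u hu h0 t
  have hb := bound_u u hu h0 t
  nlinarith [hd, hb.1, hb.2, sq_nonneg (u t - 1),
    mul_nonneg (sub_nonneg.2 hb.2) (sq_nonneg (u t - 1))]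

theorem linnik_refined (u : ℝ → ℝ) (hu : IsPosDefFnR u) (h0 : u 0 = 1)
    (m : ℕ) (hm : 1 ≤ m) (x : ℝ) :
    1 - u (2 ^ m * x) ≤
      2 ^ m * (1 - u x) * ∏ k ∈ Finset.Icc 1 m, (7 + u (2 ^ k * x)) / 4 := by
  induction m, hm using Nat.le_induction with
  | base =>
    have := key_u u hu h0 x
    simpa [show (2:ℝ)^1 = 2 by norm_num, mul_assoc] using this
  | succ n hn ih =>
    have hkey := key_u u hu h0 (2^n * x)
    rw [show 2*((2:ℝ)^n*x) = 2^(n+1)*x by ring] at hkey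
    have hb := bound_u u hu h0 (2^(n+1)*x)
    have hfac : (0:ℝ) ≤ (7 + u (2^(n+1)*x)) / 4 := by linarith [hb.1]
    calc 1 - u (2^(n+1)*x)
        ≤ 2 * (1 - u (2^n*x)) * ((7 + u (2^(n+1)*x)) / 4) := hkey
      _ ≤ 2 * (2 ^ n * (1 - u x) * ∏ k ∈ Finset.Icc 1 n, (7 + u (2 ^ k * x)) / 4)
            * ((7 + u (2^(n+1)*x)) / 4) := by
          apply mul_le_mul_of_nonneg_right _ hfac
          exact mul_le_mul_of_nonneg_left ih (by norm_num)
      _ = 2 ^ (n+1) * (1 - u x) * ∏ k ∈ Finset.Icc 1 (n+1), (7 + u (2 ^ k * x)) / 4 := by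
          rw [Finset.prod_Icc_succ_top (by omega : 1 ≤ n + 1)]
          ring
end
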